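/- Let $k$ be a field of characteristic $p > 0$. The quotient $k\langle x, d\rangle/(dx - xd - 1,\ x^p,\ d^p)$ of the Weyl algebra by the central elements $x^p$ and $d^p$ is isomorphic as a $k$-algebra to the algebra of $p \times p$ matrices over $k$. -/

import Mathlib

/-- Relations `d * x = x * d + 1`, `x^p = 0`, `d^p = 0`
(generator `false` is `x`, generator `true` is `d`). -/
inductive RestWeylRel (k : Type) [Field k] (p : ℕ) :
    FreeAlgebra k Bool → FreeAlgebra k Bool → Prop
  | weyl : RestWeylRel k p (FreeAlgebra.ι k true * FreeAlgebra.ι k false)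
      (FreeAlgebra.ι k false * FreeAlgebra.ι k true + 1)
  | xp : RestWeylRel k p (FreeAlgebra.ι k false ^ p) 0
  | dp : RestWeylRel k p (FreeAlgebra.ι k true ^ p) 0

/-!
Realise the algebra on `k[x]/(x^p)`, written in the monomial basis as `Fin p → k`: `x` acts
by multiplication and `d` by differentiation. The Weyl relation is the Leibniz rule (at the top
degree it needs `p = 0` in `k`), and `∂^p = 0` because `∂^p x^n = n.descFactorial p • x^(n-p)`.

The representation is onto: by Fermat, `1 - (x∂)^(p-1)` is the projection `f ↦ f(0)`, so
`x^i (1 - (x∂)^(p-1)) ∂^j = j! E_ij`, and `j!` is a unit for `j < p`. It is injective by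
counting dimensions: the Weyl relation reorders every word into the normally ordered `x^a d^b`,
`a, b < p`, so the quotient has dimension at most `p^2`.
-/

namespace TruncatedPolynomial

variable {k : Type*} [Field k] {p : ℕ}

variable (k p) in
noncomputable def monomial (n : ℕ) : Fin p → k :=
  if h : n < p then Pi.single ⟨n, h⟩ 1 else 0

lemma monomial_eq_zero_of_le {n : ℕ} (h : p ≤ n) : monomial k p n = 0 := by
  simp [monomial, not_lt.mpr h]

lemma monomial_val_eq_single (i : Fin p) : monomial k p i = Pi.single i 1 := by
  simp [monomial]

lemma ext_monomial {f g : Module.End k (Fin p → k)}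
    (h : ∀ n < p, f (monomial k p n) = g (monomial k p n)) : f = g :=
  (Pi.basisFun k (Fin p)).ext fun i => by simpa [monomial_val_eq_single] using h i i.isLt

variable (k p) in
noncomputable def mulX : Module.End k (Fin p → k) :=
  (Pi.basisFun k (Fin p)).constr k fun j => monomial k p (j + 1)

variable (k p) in
noncomputable def derivative : Module.End k (Fin p → k) :=
  (Pi.basisFun k (Fin p)).constr k fun j => (j : k) • monomial k p (j - 1)

lemma mulX_monomial (n : ℕ) : mulX k p (monomial k p n) = monomial k p (n + 1) := by
  by_cases hn : n < p
  · have := (Pi.basisFun k (Fin p)).constr_basis k (fun j => monomial k p (j + 1)) ⟨n, hn⟩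
    rwa [Pi.basisFun_apply, ← monomial_val_eq_single] at this
  · rw [monomial_eq_zero_of_le (by omega), monomial_eq_zero_of_le (by omega), map_zero]

lemma derivative_monomial [CharP k p] (n : ℕ) :
    derivative k p (monomial k p n) = (n : k) • monomial k p (n - 1) := by
  by_cases hn : n < p
  · have := (Pi.basisFun k (Fin p)).constr_basis k
      (fun j => (j : k) • monomial k p (j - 1)) ⟨n, hn⟩
    rwa [Pi.basisFun_apply, ← monomial_val_eq_single] at this
  rw [monomial_eq_zero_of_le (by omega), map_zero]
  obtain rfl | hn' := eq_or_lt_of_le (not_lt.mp hn)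
  · rw [CharP.cast_eq_zero, zero_smul]
  · rw [monomial_eq_zero_of_le (by omega), smul_zero]

lemma mulX_pow_monomial (m n : ℕ) :
    (mulX k p ^ m) (monomial k p n) = monomial k p (n + m) := by
  induction m with
  | zero => simp
  | succ m ih => rw [pow_succ', Module.End.mul_apply, ih, mulX_monomial, add_assoc]

lemma derivative_pow_monomial [CharP k p] (m n : ℕ) :
    (derivative k p ^ m) (monomial k p n) = (n.descFactorial m : k) • monomial k p (n - m) := by
  induction m generalizing n with
  | zero => simp
  | succ m ih =>
    rw [pow_succ, Module.End.mul_apply, derivative_monomial, map_smul, ih, smul_smul]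
    cases n with
    | zero => simp
    | succ n =>
      rw [Nat.succ_descFactorial_succ, Nat.add_sub_cancel, Nat.succ_sub_succ, Nat.cast_mul,
        Nat.cast_succ]

lemma mulX_pow_eq_zero : mulX k p ^ p = 0 :=
  ext_monomial fun n _ => by
    rw [mulX_pow_monomial, monomial_eq_zero_of_le (by omega), LinearMap.zero_apply]

lemma derivative_pow_eq_zero [CharP k p] : derivative k p ^ p = 0 :=
  ext_monomial fun n hn => by
    rw [derivative_pow_monomial, Nat.descFactorial_eq_zero_iff_lt.mpr hn]
    simp

lemma derivative_mul_mulX [CharP k p] :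
    derivative k p * mulX k p = mulX k p * derivative k p + 1 :=
  ext_monomial fun n _ => by
    cases n with
    | zero => simp [mulX_monomial, derivative_monomial]
    | succ n =>
      simp only [Module.End.mul_apply, LinearMap.add_apply, Module.End.one_apply, mulX_monomial,
        derivative_monomial, map_smul, Nat.add_sub_cancel]
      push_cast
      rw [add_smul, one_smul]

lemma mulX_mul_derivative_pow_monomial [CharP k p] (m n : ℕ) :
    ((mulX k p * derivative k p) ^ m) (monomial k p n) = ((n : k) ^ m) • monomial k p n := by
  induction m with
  | zero => simp
  | succ m ih =>
    have hn : (mulX k p * derivative k p) (monomial k p n) = (n : k) • monomial k p n := by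
      rw [Module.End.mul_apply, derivative_monomial, map_smul, mulX_monomial]
      cases n <;> simp
    rw [pow_succ, Module.End.mul_apply, hn, map_smul, ih, smul_smul, pow_succ']

lemma natCast_pow_sub_one_of_not_dvd (hp : p.Prime) [CharP k p] {n : ℕ} (hn : ¬ p ∣ n) :
    (n : k) ^ (p - 1) = 1 := by
  have : Fact p.Prime := ⟨hp⟩
  have hn' : (n : ZMod p) ≠ 0 := by rwa [Ne, ZMod.natCast_eq_zero_iff]
  simpa using congrArg (ZMod.castHom (dvd_refl p) k) (ZMod.pow_card_sub_one_eq_one hn')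

lemma one_sub_mulX_mul_derivative_pow_monomial (hp : p.Prime) [CharP k p] (n : ℕ) :
    (1 - (mulX k p * derivative k p) ^ (p - 1)) (monomial k p n)
      = if n = 0 then monomial k p n else 0 := by
  rw [LinearMap.sub_apply, Module.End.one_apply, mulX_mul_derivative_pow_monomial]
  split_ifs with h0
  · simp [h0, zero_pow (Nat.sub_ne_zero_of_lt hp.one_lt)]
  by_cases hnp : n < p
  · rw [natCast_pow_sub_one_of_not_dvd hp fun h => h0 (Nat.eq_zero_of_dvd_of_lt h hnp), one_smul,
      sub_self]
  · simp [monomial_eq_zero_of_le (not_lt.mp hnp)]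

lemma mulX_pow_mul_one_sub_pow_mul_derivative_pow (hp : p.Prime) [CharP k p] (i j : Fin p) :
    mulX k p ^ (i : ℕ) * (1 - (mulX k p * derivative k p) ^ (p - 1)) * derivative k p ^ (j : ℕ)
      = ((j : ℕ).factorial : k) • Matrix.toLin' (Matrix.single i j 1) :=
  ext_monomial fun n hn => by
    have hsingle : monomial k p n = Pi.single ⟨n, hn⟩ 1 := monomial_val_eq_single ⟨n, hn⟩
    rw [LinearMap.smul_apply, Matrix.toLin'_apply, Matrix.single_mulVec_eq,
      ← monomial_val_eq_single, Module.End.mul_apply, Module.End.mul_apply,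
      derivative_pow_monomial, map_smul, map_smul, one_sub_mulX_mul_derivative_pow_monomial hp,
      hsingle, Pi.single_apply]
    rcases lt_trichotomy n j with hlt | rfl | hgt
    · simp [Nat.descFactorial_eq_zero_iff_lt.mpr hlt, Fin.ext_iff, hlt.ne']
    · simp [Nat.descFactorial_self, mulX_pow_monomial]
    · simp [Nat.sub_ne_zero_of_lt hgt, Fin.ext_iff, hgt.ne]

end TruncatedPolynomial

theorem pow_succ_mul_eq_of_mul_eq_mul_add_one {R : Type*} [Ring R] {x d : R}
    (h : d * x = x * d + 1) (n : ℕ) :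
    d ^ (n + 1) * x = x * d ^ (n + 1) + (n + 1 : ℕ) • d ^ n := by
  induction n with
  | zero => simpa using h
  | succ n ih =>
    rw [pow_succ', mul_assoc, ih, mul_add, ← mul_assoc, h, add_mul, one_mul, mul_assoc,
      mul_smul_comm, ← pow_succ', ← pow_succ']
    module

namespace RestWeylRel

open TruncatedPolynomial

variable {k : Type} [Field k] {p : ℕ}

variable (k p) in
noncomputable def genX : RingQuot (RestWeylRel k p) :=
  RingQuot.mkAlgHom k (RestWeylRel k p) (FreeAlgebra.ι k false)

variable (k p) in
noncomputable def genD : RingQuot (RestWeylRel k p) :=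
  RingQuot.mkAlgHom k (RestWeylRel k p) (FreeAlgebra.ι k true)

lemma genD_mul_genX : genD k p * genX k p = genX k p * genD k p + 1 := by
  simpa [genX, genD] using RingQuot.mkAlgHom_rel k (RestWeylRel.weyl (k := k) (p := p))

lemma genX_pow : genX k p ^ p = 0 := by
  simpa [genX] using RingQuot.mkAlgHom_rel k (RestWeylRel.xp (k := k) (p := p))

lemma genD_pow : genD k p ^ p = 0 := by
  simpa [genD] using RingQuot.mkAlgHom_rel k (RestWeylRel.dp (k := k) (p := p))

variable (k p) in
noncomputable def toEnd [CharP k p] :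
    RingQuot (RestWeylRel k p) →ₐ[k] Module.End k (Fin p → k) :=
  RingQuot.liftAlgHom k ⟨FreeAlgebra.lift k fun b => if b then derivative k p else mulX k p,
    fun _ _ r => by
      cases r with
      | weyl => simp [derivative_mul_mulX]
      | xp => simp [mulX_pow_eq_zero]
      | dp => simp [derivative_pow_eq_zero]⟩

lemma toEnd_genX [CharP k p] : toEnd k p (genX k p) = mulX k p := by
  simp [toEnd, genX]

lemma toEnd_genD [CharP k p] : toEnd k p (genD k p) = derivative k p := by
  simp [toEnd, genD]

lemma toEnd_surjective (hp : p.Prime) [CharP k p] : Function.Surjective (toEnd k p) := by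
  have hsingle (i j : Fin p) (c : k) :
      Matrix.toLin' (Matrix.single i j c) ∈ (toEnd k p).range := by
    have hfac : ((j : ℕ).factorial : k) ≠ 0 := by
      rw [Ne, CharP.cast_eq_zero_iff k p, hp.dvd_factorial]
      omega
    refine (AlgHom.mem_range _).2 ⟨(c / (j : ℕ).factorial) •
      (genX k p ^ (i : ℕ) * (1 - (genX k p * genD k p) ^ (p - 1)) * genD k p ^ (j : ℕ)), ?_⟩
    simp only [map_smul, map_mul, map_sub, map_one, map_pow, toEnd_genX, toEnd_genD]
    rw [mulX_pow_mul_one_sub_pow_mul_derivative_pow hp, smul_smul, div_mul_cancel₀ _ hfac,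
      ← map_smul, Matrix.smul_single, smul_eq_mul, mul_one]
  suffices ∀ M, Matrix.toLin' M ∈ (toEnd k p).range from
    fun f => by simpa using this (LinearMap.toMatrix' f)
  intro M
  induction M using Matrix.induction_on' with
  | h_zero => simp
  | h_add P Q hP hQ => rw [map_add]; exact add_mem hP hQ
  | h_std_basis i j c => exact hsingle i j c

variable (k p) in
noncomputable def normalOrderedSpan : Submodule k (RingQuot (RestWeylRel k p)) :=
  Submodule.span k
    (Set.range fun ij : Fin p × Fin p => genX k p ^ (ij.1 : ℕ) * genD k p ^ (ij.2 : ℕ))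

lemma genX_pow_mul_genD_pow_mem (a b : ℕ) :
    genX k p ^ a * genD k p ^ b ∈ normalOrderedSpan k p := by
  by_cases ha : a < p
  · by_cases hb : b < p
    · exact Submodule.subset_span ⟨(⟨a, ha⟩, ⟨b, hb⟩), rfl⟩
    · rw [pow_eq_zero_of_le (not_lt.mp hb) genD_pow, mul_zero]
      exact zero_mem _
  · rw [pow_eq_zero_of_le (not_lt.mp ha) genX_pow, zero_mul]
    exact zero_mem _

lemma genX_pow_mul_genD_pow_mul_genX_mem (a b : ℕ) :
    genX k p ^ a * genD k p ^ b * genX k p ∈ normalOrderedSpan k p := by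
  cases b with
  | zero => simpa [← pow_succ] using genX_pow_mul_genD_pow_mem (k := k) (p := p) (a + 1) 0
  | succ b =>
    rw [mul_assoc, pow_succ_mul_eq_of_mul_eq_mul_add_one genD_mul_genX, mul_add, ← mul_assoc,
      ← pow_succ, mul_smul_comm]
    exact add_mem (genX_pow_mul_genD_pow_mem _ _)
      (Submodule.smul_mem _ _ (genX_pow_mul_genD_pow_mem _ _))

lemma normalOrderedSpan_eq_top : normalOrderedSpan k p = ⊤ := by
  have hgen (b : Bool) (s : RingQuot (RestWeylRel k p)) (hs : s ∈ normalOrderedSpan k p) :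
      s * RingQuot.mkAlgHom k _ (FreeAlgebra.ι k b) ∈ normalOrderedSpan k p := by
    induction hs using Submodule.span_induction with
    | mem _ h =>
      obtain ⟨⟨i, j⟩, rfl⟩ := h
      cases b
      · exact genX_pow_mul_genD_pow_mul_genX_mem _ _
      · change _ * genD k p ∈ _
        rw [mul_assoc, ← pow_succ]
        exact genX_pow_mul_genD_pow_mem _ _
    | zero => simp
    | add _ _ _ _ hs ht => rw [add_mul]; exact add_mem hs ht
    | smul c _ _ hs => rw [smul_mul_assoc]; exact Submodule.smul_mem _ c hs
  have hmul (w : FreeAlgebra k Bool) (s : RingQuot (RestWeylRel k p))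
      (hs : s ∈ normalOrderedSpan k p) :
      s * RingQuot.mkAlgHom k _ w ∈ normalOrderedSpan k p := by
    induction w generalizing s with
    | grade0 r =>
      rw [AlgHom.commutes, ← Algebra.commutes, ← Algebra.smul_def]
      exact Submodule.smul_mem _ r hs
    | grade1 b => exact hgen b s hs
    | mul a b ha hb => rw [map_mul, ← mul_assoc]; exact hb _ (ha s hs)
    | add a b ha hb => rw [map_add, mul_add]; exact add_mem (ha s hs) (hb s hs)
  refine eq_top_iff.2 fun w _ => ?_
  obtain ⟨w, rfl⟩ := RingQuot.mkAlgHom_surjective k _ w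
  simpa using hmul w 1 (by simpa using genX_pow_mul_genD_pow_mem (k := k) (p := p) 0 0)

end RestWeylRel

/-- The quotient of the Weyl algebra in characteristic `p` by the central elements
`x^p` and `d^p` is isomorphic to the algebra of `p × p` matrices over `k`. -/
theorem statement7 (k : Type) [Field k] (p : ℕ) (hp : p.Prime) [CharP k p] :
    Nonempty (RingQuot (RestWeylRel k p) ≃ₐ[k] Matrix (Fin p) (Fin p) k) := by
  have hspan := RestWeylRel.normalOrderedSpan_eq_top (k := k) (p := p)
  have : Module.Finite k (RingQuot (RestWeylRel k p)) :=
    Module.finite_def.2 (Submodule.fg_def.2 ⟨_, Set.finite_range _, hspan⟩)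
  have hdim : Module.finrank k (RingQuot (RestWeylRel k p))
      ≤ Module.finrank k (Module.End k (Fin p → k)) := by
    simpa [Module.finrank_linearMap] using finrank_le_of_span_eq_top hspan
  have hbij := OrzechProperty.bijective_of_surjective_of_finrank_le
    (RestWeylRel.toEnd k p).toLinearMap (RestWeylRel.toEnd_surjective hp) hdim
  exact ⟨(AlgEquiv.ofBijective _ hbij).trans LinearMap.toMatrixAlgEquiv'⟩
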